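/- Let Ω ⊂ ℝ² be a nonempty bounded open set and let C₀ > 0. Suppose G, defined for pairs (x,y) ∈ Ω × Ω with x ≠ y, satisfies: (a) for every x ∈ Ω the function y ↦ G(x,y) is harmonic on Ω \ {x} (hence smooth there, so its gradient ∇_y G(x,y) exists); (b) |G(x,y)| ≤ |ln|x−y|| + |ln diam(Ω)| for all x ≠ y; (c) |G(x,y)| ≤ C₀·(1 + |ln|x−y||)·δ(y)/|x−y| for all x ≠ y. Then there exists a constant C > 0, depending only on C₀ and diam(Ω), such that |∇_y G(x,y)| ≤ C·(1 + |ln|x−y||)/|x−y| for all x, y ∈ Ω with x ≠ y. (From part (v) of Theorem 3.1, n = 2.) -/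

import Mathlib

open Metric MeasureTheory

/-- The Euclidean Laplacian of a real-valued function on `ℝ²`. -/
noncomputable def laplacianR (u : EuclideanSpace ℝ (Fin 2) → ℝ)
    (x : EuclideanSpace ℝ (Fin 2)) : ℝ :=
  ∑ i : Fin 2,
    fderiv ℝ (fun y => fderiv ℝ u y (EuclideanSpace.single i 1)) x (EuclideanSpace.single i 1)

/-- `u` is harmonic on `U`: twice continuously differentiable with vanishing Laplacian. -/
def HarmonicOnR (u : EuclideanSpace ℝ (Fin 2) → ℝ)
    (U : Set (EuclideanSpace ℝ (Fin 2))) : Prop :=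
  ContDiffOn ℝ 2 u U ∧ ∀ x ∈ U, laplacianR u x = 0

/-!
Fix `x ≠ y`, let `r = ‖x - y‖` and `d = δ(y)`, and use the interior estimate
`‖∇u(y)‖ ≤ 8 M / ρ` for `u` harmonic on `B(y, ρ)` with `|u| ≤ M` there. If `d ≥ r / 2`, take
`ρ = r / 2` and bound (b); otherwise take `ρ = d` and bound (c), noting `δ ≤ 2 d` on `B(y, d)`.
On either ball `‖x - z‖` lies in `[r / 2, 2 r]`, so `|log ‖x - z‖| ≤ 1 + |log r|`.

The interior estimate: on the ball `u = Re F` with `F` holomorphic and `‖∇u‖ ≤ |F'|`;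
Borel–Carathéodory bounds `F - F(y)` on the circle of radius `ρ / 2`, and Cauchy's estimate
then bounds `F'(y)`.
-/

open InnerProductSpace Laplacian Complex Filter Topology

section LinearIsometryEquiv

variable {E E' F : Type*} [NormedAddCommGroup E] [InnerProductSpace ℝ E] [FiniteDimensional ℝ E]
  [NormedAddCommGroup E'] [InnerProductSpace ℝ E'] [FiniteDimensional ℝ E']
  [NormedAddCommGroup F] [NormedSpace ℝ F]

theorem laplacian_comp_linearIsometryEquiv (ι : E ≃ₗᵢ[ℝ] E') (u : E' → F) (x : E) :
    Δ (u ∘ ι) x = Δ u (ι x) := by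
  let b := stdOrthonormalBasis ℝ E
  have hcomp : iteratedFDeriv ℝ 2 (u ∘ ι) x =
      (iteratedFDeriv ℝ 2 u (ι x)).compContinuousLinearMap fun _ => (ι : E →L[ℝ] E') := by
    simpa [iteratedFDerivWithin_univ] using
      ι.toContinuousLinearEquiv.iteratedFDerivWithin_comp_right u uniqueDiffOn_univ
        (Set.mem_univ _) 2
  rw [laplacian_eq_iteratedFDeriv_orthonormalBasis _ b,
    laplacian_eq_iteratedFDeriv_orthonormalBasis u (b.map ι)]
  refine Finset.sum_congr rfl fun i _ => ?_
  simp only [hcomp, OrthonormalBasis.map_apply,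
    ContinuousMultilinearMap.compContinuousLinearMap_apply]
  congr 1
  ext j
  fin_cases j <;> rfl

theorem InnerProductSpace.HarmonicAt.comp_linearIsometryEquiv {u : E' → F} {x : E}
    (ι : E ≃ₗᵢ[ℝ] E') (hu : HarmonicAt u (ι x)) : HarmonicAt (u ∘ ι) x := by
  refine ⟨hu.1.comp x ι.contDiff.contDiffAt, ?_⟩
  filter_upwards [ι.continuous.continuousAt.eventually hu.2] with y hy
  rwa [laplacian_comp_linearIsometryEquiv]

end LinearIsometryEquiv

theorem laplacianR_eq_laplacian {u : EuclideanSpace ℝ (Fin 2) → ℝ}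
    {x : EuclideanSpace ℝ (Fin 2)} (hu : ContDiffAt ℝ 2 u x) : laplacianR u x = Δ u x := by
  have hdiff : DifferentiableAt ℝ (fderiv ℝ u) x :=
    (hu.fderiv_right (m := 1) (by norm_num)).differentiableAt (by norm_num)
  rw [laplacian_eq_iteratedFDeriv_orthonormalBasis u (EuclideanSpace.basisFun (Fin 2) ℝ),
    laplacianR]
  refine Finset.sum_congr rfl fun i _ => ?_
  rw [iteratedFDeriv_two_apply, fderiv_clm_apply hdiff (differentiableAt_const _)]
  simp

theorem HarmonicOnR.harmonicOnNhd {u : EuclideanSpace ℝ (Fin 2) → ℝ}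
    {U : Set (EuclideanSpace ℝ (Fin 2))} (hU : IsOpen U) (hu : HarmonicOnR u U) :
    HarmonicOnNhd u U := fun x hx => by
  refine ⟨hu.1.contDiffAt (hU.mem_nhds hx), ?_⟩
  filter_upwards [hU.mem_nhds hx] with y hy
  rw [Pi.zero_apply, ← laplacianR_eq_laplacian (hu.1.contDiffAt (hU.mem_nhds hy))]
  exact hu.2 y hy

theorem Complex.norm_deriv_le_of_forall_mem_ball_re_le {F : ℂ → ℂ} {c : ℂ} {R M : ℝ}
    (hR : 0 < R) (hF : DifferentiableOn ℂ F (ball c R))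
    (hM : ∀ z ∈ ball c R, (F z).re ≤ M) :
    ‖deriv F c‖ ≤ 4 * (M - (F c).re) / R := by
  set h : ℂ → ℂ := fun z => F (c + z) - F c
  have hh : DifferentiableOn ℂ h (ball 0 R) := by
    refine DifferentiableOn.sub_const (hF.comp (by fun_prop) fun z hz => ?_) _
    simpa using hz
  have hderiv : deriv h 0 = deriv F c := by
    simp only [h, deriv_sub_const, deriv_comp_const_add, add_zero]
  have hA : 0 ≤ M - (F c).re := sub_nonneg.2 (hM c (mem_ball_self hR))
  -- Borel–Carathéodory needs a strictly positive bound, hence the limit `A ↓ M - Re F(c)`.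
  suffices ∀ A > M - (F c).re, ‖deriv F c‖ ≤ 4 * A / R from
    ge_of_tendsto (((continuous_const.mul continuous_id).div_const R).continuousWithinAt
      (s := Set.Ioi (M - (F c).re)) (x := M - (F c).re)) (eventually_nhdsWithin_of_forall this)
  intro A hA'
  have hre : Set.MapsTo h (ball 0 R) {z | z.re ≤ A} := fun w hw => by
    have := hM (c + w) (by simpa using hw)
    simp only [h, Set.mem_ofPred_eq, sub_re]
    linarith
  have hsphere : ∀ z ∈ sphere (0 : ℂ) (R / 2), ‖h z‖ ≤ 2 * A := by
    intro z hz
    rw [mem_sphere_zero_iff_norm] at hz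
    calc ‖h z‖ ≤ 2 * A * ‖z‖ / (R - ‖z‖) :=
          borelCaratheodory_zero (by linarith) hh hre hR
            (by rw [mem_ball_zero_iff]; linarith) (by simp [h])
      _ = 2 * A := by rw [hz]; field_simp; ring
  have hcl : DiffContOnCl ℂ h (ball 0 (R / 2)) := by
    refine (hh.mono ?_).diffContOnCl
    rw [closure_ball (0 : ℂ) (by positivity)]
    exact closedBall_subset_ball (by linarith)
  calc ‖deriv F c‖ = ‖deriv h 0‖ := by rw [hderiv]
    _ ≤ 2 * A / (R / 2) := norm_deriv_le_of_forall_mem_sphere_norm_le (by positivity) hcl hsphere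
    _ = 4 * A / R := by field_simp; ring

theorem norm_fderiv_le_norm_deriv_of_eventuallyEq_re {f : ℂ → ℝ} {F : ℂ → ℂ} {c : ℂ}
    (hF : DifferentiableAt ℂ F c) (hf : f =ᶠ[𝓝 c] fun z => (F z).re) :
    ‖fderiv ℝ f c‖ ≤ ‖deriv F c‖ := by
  set L : ℂ →L[ℂ] ℂ := (ContinuousLinearMap.id ℂ ℂ).smulRight (deriv F c)
  have hre : HasFDerivAt f (reCLM.comp (L.restrictScalars ℝ)) c :=
    (reCLM.hasFDerivAt.comp c (hF.hasDerivAt.hasFDerivAt.restrictScalars ℝ)).congr_of_eventuallyEq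
      hf
  rw [hre.fderiv]
  refine ContinuousLinearMap.opNorm_le_bound _ (norm_nonneg _) fun w => ?_
  calc ‖(reCLM.comp (L.restrictScalars ℝ)) w‖ = |(deriv F c * w).re| := by
        simp [L, mul_comm]
    _ ≤ ‖deriv F c‖ * ‖w‖ := (abs_re_le_norm _).trans (norm_mul _ _).le

theorem InnerProductSpace.HarmonicOnNhd.norm_fderiv_le {f : ℂ → ℝ} {c : ℂ} {R M : ℝ}
    (hR : 0 < R) (hf : HarmonicOnNhd f (ball c R)) (hM : ∀ z ∈ ball c R, |f z| ≤ M) :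
    ‖fderiv ℝ f c‖ ≤ 8 * M / R := by
  obtain ⟨F, hFa, hFf⟩ := hf.exists_analyticOnNhd_ball_re_eq
  have hc : c ∈ ball c R := mem_ball_self hR
  calc ‖fderiv ℝ f c‖ ≤ ‖deriv F c‖ :=
        norm_fderiv_le_norm_deriv_of_eventuallyEq_re (hFa c hc).differentiableAt
          (eventually_of_mem (isOpen_ball.mem_nhds hc) fun z hz => (hFf hz).symm)
    _ ≤ 4 * (M - (F c).re) / R :=
        Complex.norm_deriv_le_of_forall_mem_ball_re_le hR hFa.differentiableOn
          fun z hz => (le_of_eq (hFf hz)).trans ((le_abs_self _).trans (hM z hz))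
    _ ≤ 8 * M / R := by
        have hFc : (F c).re = f c := hFf hc
        refine div_le_div_of_nonneg_right ?_ hR.le
        linarith [neg_abs_le (f c), hM c hc]

theorem InnerProductSpace.HarmonicOnNhd.norm_gradient_le {E : Type*} [NormedAddCommGroup E]
    [InnerProductSpace ℝ E] [FiniteDimensional ℝ E] (hE : Module.finrank ℝ E = 2)
    {u : E → ℝ} {y : E} {R M : ℝ} (hR : 0 < R)
    (hu : HarmonicOnNhd u (ball y R)) (hM : ∀ z ∈ ball y R, |u z| ≤ M) :
    ‖gradient u y‖ ≤ 8 * M / R := by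
  let ι : ℂ ≃ₗᵢ[ℝ] E :=
    orthonormalBasisOneI.equiv (stdOrthonormalBasis ℝ E) (finCongr hE.symm)
  have hball : ι ⁻¹' ball y R = ball (ι.symm y) R := ι.preimage_ball y R
  have hv : HarmonicOnNhd (u ∘ ι) (ball (ι.symm y) R) := fun z hz =>
    (hu (ι z) (hball.symm ▸ hz : z ∈ ι ⁻¹' ball y R)).comp_linearIsometryEquiv ι
  have hnorm : ‖gradient u y‖ = ‖fderiv ℝ (u ∘ ι) (ι.symm y)‖ := by
    rw [gradient, LinearIsometryEquiv.norm_map,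
      show u ∘ ι = u ∘ ι.toContinuousLinearEquiv from rfl,
      ι.toContinuousLinearEquiv.comp_right_fderiv]
    simp [ContinuousLinearMap.opNorm_comp_linearIsometryEquiv]
  rw [hnorm]
  exact hv.norm_fderiv_le hR fun z hz => hM (ι z) (hball.symm ▸ hz : z ∈ ι ⁻¹' ball y R)

theorem Metric.ball_infDist_frontier_subset {E : Type*} [NormedAddCommGroup E]
    [NormedSpace ℝ E] [FiniteDimensional ℝ E] {s : Set E} {x : E} (hx : x ∈ s)
    (hs : s ≠ Set.univ) : ball x (infDist x (frontier s)) ⊆ s := by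
  obtain ⟨z, hz, hdist⟩ := exists_mem_frontier_infDist_compl_eq_dist hx hs
  exact (ball_subset_ball ((infDist_le_dist_of_mem hz).trans hdist.ge)).trans
    ball_infDist_compl_subset

theorem IsOpen.infDist_frontier_pos {E : Type*} [NormedAddCommGroup E] [NormedSpace ℝ E]
    {s : Set E} {x : E} (hs : IsOpen s) (hx : x ∈ s) (hs' : s ≠ Set.univ) :
    0 < infDist x (frontier s) :=
  (isClosed_frontier.notMem_iff_infDist_pos (nonempty_frontier_iff.2 ⟨⟨x, hx⟩, hs'⟩)).1
    fun h => (hs.frontier_eq ▸ h).2 hx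

theorem Real.abs_log_le_one_add_abs_log {a b : ℝ} (hb : 0 < b)
    (ha : a ∈ Set.Icc (b / 2) (2 * b)) : |Real.log a| ≤ 1 + |Real.log b| := by
  have ha₀ : 0 < a := by linarith [ha.1]
  have h₁ : Real.log a - Real.log b ≤ 1 := by
    rw [← Real.log_div ha₀.ne' hb.ne']
    linarith [Real.log_le_sub_one_of_pos (div_pos ha₀ hb), (div_le_iff₀ hb).2 ha.2]
  have h₂ : Real.log b - Real.log a ≤ 1 := by
    rw [← Real.log_div hb.ne' ha₀.ne']
    linarith [Real.log_le_sub_one_of_pos (div_pos hb ha₀),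
      (div_le_iff₀ ha₀).2 (by linarith [ha.1] : b ≤ 2 * a)]
  linarith [abs_sub_abs_le_abs_sub (Real.log a) (Real.log b), abs_sub_le_iff.2 ⟨h₁, h₂⟩]

theorem norm_sub_mem_Icc_of_mem_ball {E : Type*} [SeminormedAddCommGroup E] {x y z : E}
    (hz : z ∈ ball y (‖x - y‖ / 2)) : ‖x - z‖ ∈ Set.Icc (‖x - y‖ / 2) (2 * ‖x - y‖) := by
  rw [mem_ball, dist_eq_norm] at hz
  have h₁ := norm_sub_le_norm_sub_add_norm_sub x z y
  have h₂ := norm_sub_le_norm_sub_add_norm_sub x y z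
  rw [norm_sub_rev y z] at h₂
  constructor <;> linarith [norm_nonneg (z - y)]

section BoundsOnBall

variable {E : Type*} [NormedAddCommGroup E] {Ω : Set E} {g : E → ℝ} {x y : E}

theorem abs_le_on_ball_of_abs_le_abs_log {D : ℝ}
    (hg : ∀ z ∈ Ω, x ≠ z → |g z| ≤ |Real.log ‖x - z‖| + D)
    (hball : ball y (‖x - y‖ / 2) ⊆ Ω) :
    ∀ z ∈ ball y (‖x - y‖ / 2), |g z| ≤ 1 + |Real.log ‖x - y‖| + D := by
  intro z hz
  have hxz := norm_sub_mem_Icc_of_mem_ball hz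
  have hr : 0 < ‖x - y‖ := by linarith [nonempty_ball.1 ⟨z, hz⟩]
  have hne : x ≠ z := norm_sub_pos_iff.1 (by linarith [hxz.1])
  linarith [hg z (hball hz) hne, Real.abs_log_le_one_add_abs_log hr hxz]

theorem abs_le_on_ball_of_abs_le_infDist_frontier {C₀ : ℝ} (hC₀ : 0 ≤ C₀)
    (hg : ∀ z ∈ Ω, x ≠ z →
      |g z| ≤ C₀ * (1 + |Real.log ‖x - z‖|) * infDist z (frontier Ω) / ‖x - z‖)
    (hd : infDist y (frontier Ω) ≤ ‖x - y‖ / 2)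
    (hball : ball y (infDist y (frontier Ω)) ⊆ Ω) :
    ∀ z ∈ ball y (infDist y (frontier Ω)),
      |g z| ≤ 8 * C₀ * (1 + |Real.log ‖x - y‖|) * infDist y (frontier Ω) / ‖x - y‖ := by
  intro z hz
  set d := infDist y (frontier Ω)
  set r := ‖x - y‖
  have hxz := norm_sub_mem_Icc_of_mem_ball (ball_subset_ball hd hz)
  have hr : 0 < r := by linarith [nonempty_ball.1 ⟨z, hz⟩]
  have hne : x ≠ z := norm_sub_pos_iff.1 (by linarith [hxz.1])
  have hlog := Real.abs_log_le_one_add_abs_log hr hxz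
  have hdz : infDist z (frontier Ω) ≤ 2 * d := by
    linarith [infDist_le_infDist_add_dist (x := z) (y := y) (s := frontier Ω), mem_ball.1 hz]
  calc |g z| ≤ C₀ * (1 + |Real.log ‖x - z‖|) * infDist z (frontier Ω) / ‖x - z‖ :=
        hg z (hball hz) hne
    _ ≤ C₀ * (2 * (1 + |Real.log r|)) * (2 * d) / (r / 2) := by
        have hd₀ : 0 ≤ d := infDist_nonneg
        gcongr
        · exact infDist_nonneg
        · linarith [abs_nonneg (Real.log r)]
        · exact hxz.1
    _ = 8 * C₀ * (1 + |Real.log r|) * d / r := by field_simp; ring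

end BoundsOnBall

theorem green_function_gradient_bound_dim_two_general
    (Ω : Set (EuclideanSpace ℝ (Fin 2)))
    (hΩo : IsOpen Ω) (hΩb : Bornology.IsBounded Ω)
    (C₀ : ℝ) (hC₀ : 0 < C₀)
    (G : EuclideanSpace ℝ (Fin 2) → EuclideanSpace ℝ (Fin 2) → ℝ)
    (hharm : ∀ x ∈ Ω, HarmonicOnR (fun y => G x y) (Ω \ {x}))
    (hb1 : ∀ x ∈ Ω, ∀ y ∈ Ω, x ≠ y →
      |G x y| ≤ |Real.log ‖x - y‖| + |Real.log (diam Ω)|)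
    (hb2 : ∀ x ∈ Ω, ∀ y ∈ Ω, x ≠ y →
      |G x y| ≤ C₀ * (1 + |Real.log ‖x - y‖|) * infDist y (frontier Ω) / ‖x - y‖) :
    ∃ C > (0 : ℝ), ∀ x ∈ Ω, ∀ y ∈ Ω, x ≠ y →
      ‖gradient (fun y' => G x y') y‖ ≤ C * (1 + |Real.log ‖x - y‖|) / ‖x - y‖ := by
  have hΩ : Ω ≠ Set.univ := fun h => NormedSpace.unbounded_univ ℝ _ (h ▸ hΩb)
  refine ⟨16 * (1 + |Real.log (diam Ω)|) + 64 * C₀, by positivity, fun x hx y hy hxy => ?_⟩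
  set r := ‖x - y‖
  set d := infDist y (frontier Ω)
  have hr : 0 < r := norm_sub_pos_iff.2 hxy
  have hball : ball y d ⊆ Ω := ball_infDist_frontier_subset hy hΩ
  have hG : ∀ ρ ≤ d, ρ ≤ r / 2 → HarmonicOnNhd (fun y' => G x y') (ball y ρ) :=
    fun ρ hρd hρr => ((hharm x hx).harmonicOnNhd (hΩo.sdiff isClosed_singleton)).mono <|
      Set.subset_sdiff_singleton ((ball_subset_ball hρd).trans hball) fun h => by
        rw [mem_ball, dist_eq_norm] at h; linarith
  have hL := abs_nonneg (Real.log r)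
  have hD := abs_nonneg (Real.log (diam Ω))
  rcases le_or_gt (r / 2) d with hfar | hnear
  · calc _ ≤ 8 * (1 + |Real.log r| + |Real.log (diam Ω)|) / (r / 2) :=
          (hG _ hfar le_rfl).norm_gradient_le finrank_euclideanSpace_fin (by positivity)
            (abs_le_on_ball_of_abs_le_abs_log (hb1 x hx) ((ball_subset_ball hfar).trans hball))
      _ = 16 * (1 + |Real.log r| + |Real.log (diam Ω)|) / r := by field_simp; ring
      _ ≤ 16 * (1 + |Real.log (diam Ω)|) * (1 + |Real.log r|) / r := by
          gcongr ?_ / _; nlinarith [mul_nonneg hL hD]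
      _ ≤ _ := by gcongr; linarith
  · have hd : 0 < d := hΩo.infDist_frontier_pos hy hΩ
    calc _ ≤ 8 * (8 * C₀ * (1 + |Real.log r|) * d / r) / d :=
          (hG _ le_rfl hnear.le).norm_gradient_le finrank_euclideanSpace_fin hd
            (abs_le_on_ball_of_abs_le_infDist_frontier hC₀.le (hb2 x hx) hnear.le hball)
      _ = 64 * C₀ * (1 + |Real.log r|) / r := by field_simp; ring
      _ ≤ _ := by gcongr; linarith

theorem green_function_gradient_bound_dim_two
    (Ω : Set (EuclideanSpace ℝ (Fin 2)))
    (hΩo : IsOpen Ω) (hΩb : Bornology.IsBounded Ω) (hΩne : Ω.Nonempty)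
    (C₀ : ℝ) (hC₀ : 0 < C₀)
    (G : EuclideanSpace ℝ (Fin 2) → EuclideanSpace ℝ (Fin 2) → ℝ)
    (hharm : ∀ x ∈ Ω, HarmonicOnR (fun y => G x y) (Ω \ {x}))
    (hb1 : ∀ x ∈ Ω, ∀ y ∈ Ω, x ≠ y →
      |G x y| ≤ |Real.log ‖x - y‖| + |Real.log (diam Ω)|)
    (hb2 : ∀ x ∈ Ω, ∀ y ∈ Ω, x ≠ y →
      |G x y| ≤ C₀ * (1 + |Real.log ‖x - y‖|) * infDist y (frontier Ω) / ‖x - y‖) :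
    ∃ C > (0 : ℝ), ∀ x ∈ Ω, ∀ y ∈ Ω, x ≠ y →
      ‖gradient (fun y' => G x y') y‖ ≤ C * (1 + |Real.log ‖x - y‖|) / ‖x - y‖ :=
  green_function_gradient_bound_dim_two_general Ω hΩo hΩb C₀ hC₀ G hharm hb1 hb2
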